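/- Let σ > 0, L̃(R,r) = min{(R+r)², σ²} − min{(R−r)², σ²}, and L(R,r) = L̃(R,r)/(R·r) for R, r > 0. Then at every point R > 0 where L is differentiable in R, |∂_R L(R,r)| ≤ (1/R)·(2σ/r + L(R,r)). -/

import Mathlib

noncomputable def Ltilde (σ R r : ℝ) : ℝ :=
  min ((R + r) ^ 2) (σ ^ 2) - min ((R - r) ^ 2) (σ ^ 2)

noncomputable def Lker (σ R r : ℝ) : ℝ := Ltilde σ R r / (R * r)

set_option maxHeartbeats 1000000 in
theorem Lker_deriv_bound (σ : ℝ) (hσ : 0 < σ) (R r : ℝ) (hR : 0 < R) (hr : 0 < r)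
    (d : ℝ) (hd : HasDerivAt (fun R' => Lker σ R' r) d R) :
    |d| ≤ (1 / R) * (2 * σ / r + Lker σ R r) := by
  have hr0 : r ≠ 0 := hr.ne'
  have hR0 : R ≠ 0 := hR.ne'
  have hRr : (0:ℝ) < R * r := mul_pos hR hr
  have hR2r : (0:ℝ) < R ^ 2 * r := by positivity
  have hLv : 0 ≤ Ltilde σ R r := by
    rw [Ltilde]
    have h1 : (R - r) ^ 2 ≤ (R + r) ^ 2 := by nlinarith
    have := min_le_min h1 (le_refl (σ ^ 2))
    linarith
  set D : ℝ := d * (R * r) + Lker σ R r * r with hDdef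
  have hmul : HasDerivAt (fun R' => Lker σ R' r * (R' * r)) D R := by
    have h1 : HasDerivAt (fun R' : ℝ => R' * r) r R := by
      simpa using (hasDerivAt_id R).mul_const r
    simpa [hDdef] using hd.fun_mul h1
  have hEq : (fun R' => Ltilde σ R' r) =ᶠ[nhds R] (fun R' => Lker σ R' r * (R' * r)) := by
    filter_upwards [eventually_gt_nhds hR] with x hx
    rw [Lker, div_mul_cancel₀]
    exact mul_ne_zero hx.ne' hr0
  have hD : HasDerivAt (fun R' => Ltilde σ R' r) D R := hmul.congr_of_eventuallyEq hEq
  have hkey : d * (R ^ 2 * r) = D * R - Ltilde σ R r := by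
    rw [hDdef, Lker]; field_simp; ring
  suffices hmain : |d * (R ^ 2 * r)| ≤ 2 * σ * R + Ltilde σ R r by
    calc |d| = |d * (R ^ 2 * r)| / (R ^ 2 * r) := by
          rw [abs_mul, abs_of_pos hR2r, mul_div_cancel_right₀ _ hR2r.ne']
      _ ≤ (2 * σ * R + Ltilde σ R r) / (R ^ 2 * r) := by gcongr
      _ = (1 / R) * (2 * σ / r + Lker σ R r) := by rw [Lker]; field_simp
  rw [hkey]
  rcases lt_trichotomy (R + r) σ with hA | hA | hA
  · -- both branches quadratic
    have hDval : D = 2 * (R + r) - 2 * (R - r) := by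
      have hg : HasDerivAt (fun x : ℝ => (x + r) ^ 2 - (x - r) ^ 2)
          (2 * (R + r) - 2 * (R - r)) R := by
        have h1 : HasDerivAt (fun x : ℝ => (x + r) ^ 2) (2 * (R + r)) R := by
          simpa using ((hasDerivAt_id R).add_const r).fun_pow 2
        have h2 : HasDerivAt (fun x : ℝ => (x - r) ^ 2) (2 * (R - r)) R := by
          simpa using ((hasDerivAt_id R).sub_const r).fun_pow 2
        exact h1.sub h2
      refine hD.unique (hg.congr_of_eventuallyEq ?_)
      filter_upwards [eventually_lt_nhds (show R < σ - r by linarith),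
        eventually_gt_nhds (show r - σ < R by linarith),
        eventually_gt_nhds (show -σ - r < R by linarith)] with x h1 h2 h3
      rw [Ltilde, min_eq_left (by nlinarith), min_eq_left (by nlinarith)]
    have hLvv : Ltilde σ R r = 4 * R * r := by
      rw [Ltilde, min_eq_left (by nlinarith), min_eq_left (by nlinarith)]; ring
    rw [hDval, hLvv, abs_le]
    constructor <;> nlinarith
  · -- boundary R + r = σ : impossible
    exfalso
    have hb : (R - r) ^ 2 < σ ^ 2 := by nlinarith
    have hbl : r - σ < R := by nlinarith [sq_nonneg (R - r + σ)]
    have hbr : R < r + σ := by nlinarith [sq_nonneg (R - r - σ)]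
    have hLR : Ltilde σ R r = σ ^ 2 - (R - r) ^ 2 := by
      rw [Ltilde, min_eq_right (by nlinarith), min_eq_left hb.le]
    have hIci : HasDerivWithinAt (fun R' => Ltilde σ R' r) (-(2 * (R - r))) (Set.Ici R) R := by
      have hg : HasDerivAt (fun x : ℝ => σ ^ 2 - (x - r) ^ 2) (-(2 * (R - r))) R := by
        have h2 : HasDerivAt (fun x : ℝ => (x - r) ^ 2) (2 * (R - r)) R := by
          simpa using ((hasDerivAt_id R).sub_const r).fun_pow 2
        simpa using (hasDerivAt_const R (σ ^ 2)).fun_sub h2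
      refine hg.hasDerivWithinAt.congr_of_eventuallyEq ?_ (by simpa using hLR)
      filter_upwards [eventually_mem_nhdsWithin,
        (((eventually_gt_nhds hbl).and (eventually_lt_nhds hbr)).filter_mono
          nhdsWithin_le_nhds)] with x hxs hx
      rw [Ltilde, min_eq_right (by simp only [Set.mem_Ici] at hxs; nlinarith),
        min_eq_left (by nlinarith [hx.1, hx.2])]
    have hIic : HasDerivWithinAt (fun R' => Ltilde σ R' r)
        (2 * (R + r) - 2 * (R - r)) (Set.Iic R) R := by
      have hg : HasDerivAt (fun x : ℝ => (x + r) ^ 2 - (x - r) ^ 2)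
          (2 * (R + r) - 2 * (R - r)) R := by
        have h1 : HasDerivAt (fun x : ℝ => (x + r) ^ 2) (2 * (R + r)) R := by
          simpa using ((hasDerivAt_id R).add_const r).fun_pow 2
        have h2 : HasDerivAt (fun x : ℝ => (x - r) ^ 2) (2 * (R - r)) R := by
          simpa using ((hasDerivAt_id R).sub_const r).fun_pow 2
        exact h1.sub h2
      refine hg.hasDerivWithinAt.congr_of_eventuallyEq ?_ ?_
      · filter_upwards [eventually_mem_nhdsWithin,
          (((eventually_gt_nhds hbl).and ((eventually_lt_nhds hbr).and
            (eventually_gt_nhds (show -r < R by linarith)))).filter_mono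
            nhdsWithin_le_nhds)] with x hxs hx
        simp only [Set.mem_Iic] at hxs
        rw [Ltilde, min_eq_left (by nlinarith [hx.2.2]), min_eq_left (by nlinarith [hx.1, hx.2.1])]
      · rw [hLR]; nlinarith
    have h1 := (uniqueDiffOn_Ici R R Set.self_mem_Ici).eq_deriv _ hD.hasDerivWithinAt hIci
    have h2 := (uniqueDiffOn_Iic R R Set.self_mem_Iic).eq_deriv _ hD.hasDerivWithinAt hIic
    nlinarith [h1, h2]
  · rcases lt_trichotomy ((R - r) ^ 2) (σ ^ 2) with hb | hb | hb
    · -- σ² branch on left, quadratic on right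
      have hbl : r - σ < R := by nlinarith [sq_nonneg (R - r + σ)]
      have hbr : R < r + σ := by nlinarith [sq_nonneg (R - r - σ)]
      have hDval : D = -(2 * (R - r)) := by
        have hg : HasDerivAt (fun x : ℝ => σ ^ 2 - (x - r) ^ 2) (-(2 * (R - r))) R := by
          have h2 : HasDerivAt (fun x : ℝ => (x - r) ^ 2) (2 * (R - r)) R := by
            simpa using ((hasDerivAt_id R).sub_const r).fun_pow 2
          simpa using (hasDerivAt_const R (σ ^ 2)).fun_sub h2
        refine hD.unique (hg.congr_of_eventuallyEq ?_)
        filter_upwards [eventually_gt_nhds (show σ - r < R by linarith),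
          eventually_gt_nhds hbl, eventually_lt_nhds hbr] with x h1 h2 h3
        rw [Ltilde, min_eq_right (by nlinarith), min_eq_left (by nlinarith)]
      have hLvv : Ltilde σ R r = σ ^ 2 - (R - r) ^ 2 := by
        rw [Ltilde, min_eq_right (by nlinarith), min_eq_left hb.le]
      rw [hDval, hLvv, abs_le]
      constructor <;> nlinarith
    · -- boundary |R - r| = σ : impossible
      exfalso
      have h0 : (R - r - σ) * (R - r + σ) = 0 := by linear_combination hb
      rcases mul_eq_zero.mp h0 with h | h
      · -- R - r = σ
        have hIci : HasDerivWithinAt (fun R' => Ltilde σ R' r) 0 (Set.Ici R) R := by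
          refine (hasDerivAt_const R (0:ℝ)).hasDerivWithinAt.congr_of_eventuallyEq ?_ ?_
          · filter_upwards [eventually_mem_nhdsWithin] with x hxs
            simp only [Set.mem_Ici] at hxs
            rw [Ltilde, min_eq_right (by nlinarith), min_eq_right (by nlinarith)]
            ring
          · rw [Ltilde, min_eq_right (by nlinarith), min_eq_right (by nlinarith)]
            ring
        have hIic : HasDerivWithinAt (fun R' => Ltilde σ R' r) (-(2 * (R - r)))
            (Set.Iic R) R := by
          have hg : HasDerivAt (fun x : ℝ => σ ^ 2 - (x - r) ^ 2) (-(2 * (R - r))) R := by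
            have h2 : HasDerivAt (fun x : ℝ => (x - r) ^ 2) (2 * (R - r)) R := by
              simpa using ((hasDerivAt_id R).sub_const r).fun_pow 2
            simpa using (hasDerivAt_const R (σ ^ 2)).fun_sub h2
          refine hg.hasDerivWithinAt.congr_of_eventuallyEq ?_ ?_
          · filter_upwards [eventually_mem_nhdsWithin,
              (((eventually_gt_nhds (show r - σ < R by nlinarith)).and
                (eventually_gt_nhds (show σ - r < R by nlinarith))).filter_mono
                nhdsWithin_le_nhds)] with x hxs hx
            simp only [Set.mem_Iic] at hxs
            rw [Ltilde, min_eq_right (by nlinarith [hx.2]), min_eq_left (by nlinarith [hx.1])]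
          · rw [Ltilde, min_eq_right (by nlinarith), min_eq_left (by nlinarith)]
        have h1 := (uniqueDiffOn_Ici R R Set.self_mem_Ici).eq_deriv _ hD.hasDerivWithinAt hIci
        have h2 := (uniqueDiffOn_Iic R R Set.self_mem_Iic).eq_deriv _ hD.hasDerivWithinAt hIic
        nlinarith [h1, h2]
      · -- R - r = -σ
        have hIic : HasDerivWithinAt (fun R' => Ltilde σ R' r) 0 (Set.Iic R) R := by
          refine (hasDerivAt_const R (0:ℝ)).hasDerivWithinAt.congr_of_eventuallyEq ?_ ?_
          · filter_upwards [eventually_mem_nhdsWithin,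
              ((eventually_gt_nhds (show σ - r < R by linarith)).filter_mono
                nhdsWithin_le_nhds)] with x hxs hx
            simp only [Set.mem_Iic] at hxs
            rw [Ltilde, min_eq_right (by nlinarith), min_eq_right (by nlinarith)]
            ring
          · rw [Ltilde, min_eq_right (by nlinarith), min_eq_right (by nlinarith)]
            ring
        have hIci : HasDerivWithinAt (fun R' => Ltilde σ R' r) (-(2 * (R - r)))
            (Set.Ici R) R := by
          have hg : HasDerivAt (fun x : ℝ => σ ^ 2 - (x - r) ^ 2) (-(2 * (R - r))) R := by
            have h2 : HasDerivAt (fun x : ℝ => (x - r) ^ 2) (2 * (R - r)) R := by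
              simpa using ((hasDerivAt_id R).sub_const r).fun_pow 2
            simpa using (hasDerivAt_const R (σ ^ 2)).fun_sub h2
          refine hg.hasDerivWithinAt.congr_of_eventuallyEq ?_ ?_
          · filter_upwards [eventually_mem_nhdsWithin,
              ((eventually_lt_nhds (show R < r + σ by nlinarith)).filter_mono
                nhdsWithin_le_nhds)] with x hxs hx
            simp only [Set.mem_Ici] at hxs
            rw [Ltilde, min_eq_right (by nlinarith), min_eq_left (by nlinarith)]
          · rw [Ltilde, min_eq_right (by nlinarith), min_eq_left (by nlinarith)]
        have h1 := (uniqueDiffOn_Ici R R Set.self_mem_Ici).eq_deriv _ hD.hasDerivWithinAt hIci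
        have h2 := (uniqueDiffOn_Iic R R Set.self_mem_Iic).eq_deriv _ hD.hasDerivWithinAt hIic
        nlinarith [h1, h2]
    · -- both branches saturated: Ltilde locally 0
      have hbig : σ < |R - r| := by
        rcases abs_cases (R - r) with ⟨he, _⟩ | ⟨he, _⟩ <;> nlinarith [abs_nonneg (R - r)]
      have hDval : D = 0 := by
        refine hD.unique ((hasDerivAt_const R (0:ℝ)).congr_of_eventuallyEq ?_)
        rcases abs_cases (R - r) with ⟨he, _⟩ | ⟨he, _⟩
        · filter_upwards [eventually_gt_nhds (show σ - r < R by linarith [hbig, he]),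
            eventually_gt_nhds (show r + σ < R by linarith [hbig, he])] with x h1 h2
          rw [Ltilde, min_eq_right (by nlinarith), min_eq_right (by nlinarith)]
          ring
        · filter_upwards [eventually_gt_nhds (show σ - r < R by linarith),
            eventually_lt_nhds (show R < r - σ by linarith [hbig, he])] with x h1 h2
          rw [Ltilde, min_eq_right (by nlinarith), min_eq_right (by nlinarith)]
          ring
      have hLvv : Ltilde σ R r = 0 := by
        rw [Ltilde, min_eq_right (by nlinarith), min_eq_right hb.le]
        ring
      rw [hDval, hLvv]
      norm_num
      positivity
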